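/- Let n, m ≥ 2. Let Λ ⊆ S^n be a nonempty closed subset such that the open set Ω = S^n \ Λ satisfies the weak Koebe–Maskit condition and has at least two connected components, and let f : Λ → S^m be a continuous injective map with f(Λ) ≠ S^m. Then there exist a circle C in S^n, a codimension-one sphere S in S^m, and a point ξ ∈ Λ with ξ ∈ C and f(ξ) ∈ S, such that there is NO sequence of pairs (C_k, S_k), where C_k is a circle in S^n with C_k ∩ Λ ≠ ∅, S_k is a codimension-one sphere in S^m, and f(C_k ∩ Λ) ⊆ S_k, for which C_k converges to C and S_k converges to S. (This combines the paper's Lemma 4.6 and Theorem 4.1, and is the topological mechanism behind Theorem 1.1.) -/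

import Mathlib

open Metric Set

noncomputable section

/-- `Euc k` is the Euclidean space `ℝ^{k+1}`. -/
abbrev Euc (k : ℕ) : Type := EuclideanSpace ℝ (Fin (k+1))

/-- The unit sphere `S^k ⊆ ℝ^{k+1}`. -/
def unitSphere (k : ℕ) : Set (Euc k) := Metric.sphere 0 1

/-- A circle in `S^n`: the intersection of `S^n` with a 2-dimensional affine
subspace of `ℝ^{n+1}`, provided this intersection is infinite. -/
def IsCircle (n : ℕ) (C : Set (Euc n)) : Prop :=
  ∃ P : AffineSubspace ℝ (Euc n),
    Module.finrank ℝ P.direction = 2 ∧ C = unitSphere n ∩ (P : Set (Euc n)) ∧ C.Infinite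

/-- A codimension-one sphere in `S^m`: the intersection of `S^m` with an
`m`-dimensional affine subspace of `ℝ^{m+1}`, provided it is infinite. -/
def IsCodimOneSphere (m : ℕ) (S : Set (Euc m)) : Prop :=
  ∃ H : AffineSubspace ℝ (Euc m),
    Module.finrank ℝ H.direction = m ∧ S = unitSphere m ∩ (H : Set (Euc m)) ∧ S.Infinite

/-- Convergence of a sequence of subsets in the Hausdorff distance. -/
def SetsConvergeTo {X : Type*} [MetricSpace X] (K : ℕ → Set X) (L : Set X) : Prop :=
  Filter.Tendsto (fun k => Metric.hausdorffDist (K k) L) Filter.atTop (nhds 0)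

/-- `limsup` of a sequence of sets: `⋂_N closure (⋃_{k ≥ N} S_k)`. -/
def setLimsup {X : Type*} [TopologicalSpace X] (S : ℕ → Set X) : Set X :=
  ⋂ N : ℕ, closure (⋃ k ≥ N, S k)

/-- The weak Koebe–Maskit condition: for every `ε > 0`, only finitely many
connected components of `Ω` have diameter greater than `ε`. -/
def WKM {X : Type*} [MetricSpace X] (Ω : Set X) : Prop :=
  ∀ ε > 0, {U : Set X | (∃ x ∈ Ω, U = connectedComponentIn Ω x) ∧ ε < Metric.diam U}.Finite

/-- `Λ ⊆ S^n` is doubly stable if every `ξ ∈ Λ` lies on a circle `C` such that for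
every sequence of circles converging to `C` the limsup of the slices `C_k ∩ Λ`
contains at least two points. -/
def DoublyStable (n : ℕ) (Λ : Set (Euc n)) : Prop :=
  ∀ ξ ∈ Λ, ∃ C : Set (Euc n), IsCircle n C ∧ ξ ∈ C ∧
    ∀ Ck : ℕ → Set (Euc n), (∀ k, IsCircle n (Ck k)) → SetsConvergeTo Ck C →
      (setLimsup (fun k => Ck k ∩ Λ)).Nontrivial


/-!
Since `Ω = S^n \ Λ` has two components, pick `u, v` in different ones and, for `ξ ∈ Λ`, let `C`
be the circle through `ξ, u, v`. If circles `C_k → C` met `Λ` in at most one limit point `w`,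
then for large `k` the arc of `C_k` outside a small ball around `w` would miss `Λ` and join
points near `u` to points near `v` inside `Ω`; so the limsup of `C_k ∩ Λ` has two points.
On the target side, take `q ∉ f(Λ)`, a nearest point `p = f(ξ)` of `f(Λ)` to `q`, and the
codimension-one sphere `S` in which the sphere with diameter `[p, q]` meets `S^m`; it meets
`f(Λ)` only at `p`. If `(C_k, S_k) → (C, S)` with `f(C_k ∩ Λ) ⊆ S_k`, the two limit points of
`C_k ∩ Λ` are mapped into `f(Λ) ∩ S = {p}`, contradicting injectivity.
-/

open Filter Topology

section SetLimsup

variable {X : Type*} [TopologicalSpace X] {A : ℕ → Set X}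

theorem setLimsup_subset_of_isClosed {F : Set X} (hF : IsClosed F) (hA : ∀ k, A k ⊆ F) :
    setLimsup A ⊆ F := fun _ hx =>
  hF.closure_subset_iff.2 (iUnion₂_subset fun k _ => hA k) (mem_iInter.1 hx 0)

theorem image_setLimsup_subset {Y : Type*} [TopologicalSpace Y] {F : Set X} {f : X → Y}
    (hF : IsClosed F) (hA : ∀ k, A k ⊆ F) (hf : ContinuousOn f F) :
    f '' setLimsup A ⊆ setLimsup (fun k => f '' A k) := by
  rintro _ ⟨x, hx, rfl⟩
  refine mem_iInter.2 fun N => ?_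
  have hsub : closure (⋃ k ≥ N, A k) ⊆ F :=
    hF.closure_subset_iff.2 (iUnion₂_subset fun k _ => hA k)
  simpa only [image_iUnion₂] using (hf.mono hsub).image_closure ⟨x, mem_iInter.1 hx N, rfl⟩

theorem setLimsup_inter_nonempty [T2Space X] {F : Set X} (hF : IsCompact F)
    (hA : ∃ᶠ k in atTop, (A k ∩ F).Nonempty) : (setLimsup A ∩ F).Nonempty := by
  have hN : ∀ N, (F ∩ closure (⋃ k ≥ N, A k)).Nonempty := fun N => by
    obtain ⟨k, hk, y, hyA, hyF⟩ := frequently_atTop.1 hA N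
    exact ⟨y, hyF, subset_closure (mem_biUnion hk hyA)⟩
  have hne := IsCompact.nonempty_iInter_of_sequence_nonempty_isCompact_isClosed _
    (fun N => inter_subset_inter_right _ (closure_mono
      (biUnion_subset_biUnion_left fun k (hk : N + 1 ≤ k) => (Nat.le_succ N).trans hk)))
    hN (hF.inter_right isClosed_closure) (fun N => hF.isClosed.inter isClosed_closure)
  rwa [← inter_iInter, inter_comm] at hne

theorem eventually_subset_of_setLimsup_subset [T2Space X] {K U : Set X} (hK : IsCompact K)
    (hA : ∀ k, A k ⊆ K) (hU : IsOpen U) (hAU : setLimsup A ⊆ U) : ∀ᶠ k in atTop, A k ⊆ U := by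
  by_contra h
  have hfreq : ∃ᶠ k in atTop, (A k ∩ (K \ U)).Nonempty := (not_eventually.1 h).mono fun k hk =>
    let ⟨y, hyA, hyU⟩ := not_subset.1 hk
    ⟨y, hyA, hA k hyA, hyU⟩
  obtain ⟨y, hyA, -, hyU⟩ := setLimsup_inter_nonempty (hK.diff hU) hfreq
  exact hyU (hAU hyA)

end SetLimsup

theorem setLimsup_subset_of_setsConvergeTo {X : Type*} [MetricSpace X] {B K : ℕ → Set X}
    {S : Set X} (hS : IsClosed S) (hB : ∀ k, B k ⊆ K k)
    (hfin : ∀ k, Metric.hausdorffEDist (K k) S ≠ ⊤) (hK : SetsConvergeTo K S) :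
    setLimsup B ⊆ S := by
  intro x hx
  rw [← hS.closure_eq, closure_eq_iInter_cthickening]
  refine mem_iInter₂.2 fun δ hδ => ?_
  obtain ⟨N, hN⟩ := eventually_atTop.1 (hK.eventually (gt_mem_nhds hδ))
  have hthick : ⋃ k ≥ N, B k ⊆ thickening δ S := iUnion₂_subset fun k hk _ hy =>
    mem_thickening_iff.2 (exists_dist_lt_of_hausdorffDist_lt (hB k hy) (hN k hk) (hfin k))
  exact closure_thickening_subset_cthickening δ S (closure_mono hthick (mem_iInter.1 hx N))

theorem eq_of_dist_midpoint_le_of_le_dist {F : Type*} [NormedAddCommGroup F] [NormedSpace ℝ F]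
    [StrictConvexSpace ℝ F] {p q z : F} (hz : dist z (midpoint ℝ p q) ≤ dist p q / 2)
    (hzq : dist p q ≤ dist z q) : z = p := by
  have hmq : dist (midpoint ℝ p q) q = dist p q / 2 := by simp [dist_midpoint_right]; ring
  have htri := dist_triangle z (midpoint ℝ p q) q
  have hzq' : dist q z = dist p q := by rw [dist_comm]; exact le_antisymm (by linarith) hzq
  have hmid : midpoint ℝ q z = midpoint ℝ q p := by
    rw [midpoint_comm q p]
    exact (eq_midpoint_of_dist_eq_half (by rw [dist_comm, hmq, hzq'])
      (by rw [dist_comm, hzq']; linarith)).symm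
  exact (midpoint_eq_iff.1 hmid).symm.trans (midpoint_eq_iff.1 rfl)

open Complex in
theorem Complex.inner_ofReal_mul_exp_mul_I (w : ℂ) (ρ φ : ℝ) :
    inner ℝ w (((ρ / ‖w‖ : ℝ) : ℂ) * w * exp (φ * I)) = ρ * ‖w‖ * Real.cos φ := by
  rcases eq_or_ne w 0 with rfl | hw
  · simp
  have hw' : (‖w‖ : ℂ) ≠ 0 := by exact_mod_cast norm_ne_zero_iff.2 hw
  have : ((ρ / ‖w‖ : ℝ) : ℂ) * w * exp (φ * I) * (starRingEnd ℂ) w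
      = ((ρ * ‖w‖ : ℝ) : ℂ) * exp (φ * I) := by
    rw [mul_right_comm, mul_assoc _ w, mul_conj, normSq_eq_norm_sq]
    push_cast
    field_simp
  rw [Complex.inner, this, re_ofReal_mul, exp_ofReal_mul_I_re]

/-- Every point of the arc is joined to its centre `z₀ = ρ w / ‖w‖` by a subarc along which
`⟪w, ·⟫` only grows. -/
theorem Complex.isPreconnected_sphere_inter_halfSpace (w : ℂ) (ρ s : ℝ) :
    IsPreconnected (sphere (0 : ℂ) ρ ∩ {z | s ≤ inner ℝ w z}) := by
  rcases le_or_gt ρ 0 with hρ | hρ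
  · exact (subsingleton_sphere 0 hρ).anti inter_subset_left |>.isPreconnected
  rcases eq_or_ne w 0 with rfl | hw
  · by_cases hs : s ≤ 0
    · simpa [hs] using isPreconnected_sphere (by simp [Complex.rank_real_complex]) 0 ρ
    · simp [hs, isPreconnected_empty]
  set z₀ : ℂ := ((ρ / ‖w‖ : ℝ) : ℂ) * w
  have hz₀ : z₀ ≠ 0 := by simp [z₀, hw, hρ.ne']
  refine isPreconnected_of_forall z₀ fun z ⟨hz, hzs⟩ => ?_
  set φ := (z / z₀).arg
  have hnorm : ‖z / z₀‖ = 1 := by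
    simp [z₀, mem_sphere_zero_iff_norm.1 hz, abs_of_pos hρ, hw, hρ.ne']
  have hzφ : z = z₀ * Complex.exp (φ * Complex.I) := by
    rw [← one_mul (Complex.exp _), ← Complex.ofReal_one, ← hnorm,
      Complex.norm_mul_exp_arg_mul_I, mul_div_cancel₀ _ hz₀]
  set γ : ℝ → ℂ := fun t => z₀ * Complex.exp ((t * φ : ℝ) * Complex.I)
  refine ⟨γ '' Icc 0 1, ?_, ⟨0, by simp [γ]⟩, ⟨1, by simp [γ, hzφ]⟩,
    isPreconnected_Icc.image γ (by fun_prop)⟩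
  rintro _ ⟨t, ⟨ht0, ht1⟩, rfl⟩
  refine ⟨?_, ?_⟩
  · rw [mem_sphere_zero_iff_norm, norm_mul, Complex.norm_exp_ofReal_mul_I, mul_one]
    simp [z₀, abs_of_pos hρ, hw]
  · rw [mem_ofPred_eq, hzφ, Complex.inner_ofReal_mul_exp_mul_I] at hzs
    simp only [mem_ofPred_eq, γ, z₀, Complex.inner_ofReal_mul_exp_mul_I]
    refine hzs.trans (mul_le_mul_of_nonneg_left ?_ (by positivity))
    rw [← Real.cos_abs φ, ← Real.cos_abs (t * φ), abs_mul, abs_of_nonneg ht0]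
    exact Real.cos_le_cos_of_nonneg_of_le_pi (by positivity) (Complex.abs_arg_le_pi _)
      (mul_le_of_le_one_left (abs_nonneg _) ht1)

section InnerProductSpace

variable {E : Type*} [NormedAddCommGroup E] [InnerProductSpace ℝ E]

theorem mem_sphere_iff_dist_orthogonalProjection_eq {P : AffineSubspace ℝ E} [Nonempty P]
    [P.direction.HasOrthogonalProjection] {x y y₀ : E} {r : ℝ} (hy₀ : y₀ ∈ sphere x r ∩ P)
    (hy : y ∈ P) :
    y ∈ sphere x r ↔ dist y (EuclideanGeometry.orthogonalProjection P x) =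
      dist y₀ (EuclideanGeometry.orthogonalProjection P x) := by
  have hpy :=
    EuclideanGeometry.dist_sq_eq_dist_orthogonalProjection_sq_add_dist_orthogonalProjection_sq x hy
  have hpy₀ :=
    EuclideanGeometry.dist_sq_eq_dist_orthogonalProjection_sq_add_dist_orthogonalProjection_sq x
      hy₀.2
  rw [mem_sphere.1 hy₀.1] at hpy₀
  rw [mem_sphere, ← sq_eq_sq₀ dist_nonneg (dist_nonneg.trans_eq (mem_sphere.1 hy₀.1)),
    ← sq_eq_sq₀ dist_nonneg dist_nonneg]
  constructor <;> intro h <;> nlinarith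

/-- The cap is the radial projection of the convex set of points of the closed unit ball in the
half-space; `0 ≤ t` keeps `0` out of that set and makes the projection increase `⟪u, ·⟫`. -/
theorem isPreconnected_sphere_inter_halfSpace_of_nonneg (u : E) {t : ℝ} (ht : 0 ≤ t) :
    IsPreconnected (sphere (0 : E) 1 ∩ {y | t < inner ℝ u y}) := by
  set K := closedBall (0 : E) 1 ∩ {y | t < inner ℝ u y}
  have hK0 : ∀ y ∈ K, 0 < ‖y‖ := fun y hy =>
    norm_pos_iff.2 fun h => by simp [K, h] at hy; linarith
  have heq : sphere (0 : E) 1 ∩ {y | t < inner ℝ u y} = (fun y => ‖y‖⁻¹ • y) '' K := by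
    ext y
    constructor
    · rintro ⟨hy1, hy2⟩
      exact ⟨y, ⟨sphere_subset_closedBall hy1, hy2⟩, by simp [mem_sphere_zero_iff_norm.1 hy1]⟩
    · rintro ⟨y, ⟨hy1, hy2⟩, rfl⟩
      have hy0 := hK0 y ⟨hy1, hy2⟩
      refine ⟨by simp [norm_smul, hy0.ne'], ?_⟩
      simp only [mem_ofPred_eq, inner_smul_right] at hy2 ⊢
      have : 1 ≤ ‖y‖⁻¹ := one_le_inv₀ hy0 |>.2 (mem_closedBall_zero_iff.1 hy1)
      nlinarith
  rw [heq]
  refine ((convex_closedBall 0 1).inter (convex_halfSpace_gt (innerₛₗ ℝ u).isLinear t))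
    |>.isPreconnected.image _ fun y hy => ?_
  exact ((continuous_norm.continuousAt.inv₀ (hK0 y hy).ne').smul continuousAt_id).continuousWithinAt

theorem isPreconnected_sphere_inter_ball {u : E} (hu : ‖u‖ = 1) {ε : ℝ} (hε : ε ^ 2 ≤ 2) :
    IsPreconnected (sphere (0 : E) 1 ∩ ball u ε) := by
  rcases le_or_gt ε 0 with hε0 | hε0
  · simp [ball_eq_empty.2 hε0, isPreconnected_empty]
  convert isPreconnected_sphere_inter_halfSpace_of_nonneg u (t := 1 - ε ^ 2 / 2) (by linarith)
    using 1
  ext y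
  simp only [mem_inter_iff, mem_ball, mem_ofPred_eq, and_congr_right_iff]
  intro hy
  rw [mem_sphere_zero_iff_norm] at hy
  rw [dist_eq_norm, ← sq_lt_sq₀ (norm_nonneg _) hε0.le, norm_sub_sq_real, hy, hu, real_inner_comm]
  constructor <;> intro h <;> linarith

theorem eventually_sphere_inter_ball_subset_connectedComponentIn {Λ : Set E} (hΛ : IsClosed Λ)
    {u : E} (hu : u ∈ sphere (0 : E) 1 \ Λ) :
    ∀ᶠ ε in 𝓝[>] (0 : ℝ), Disjoint (ball u (2 * ε)) Λ ∧
      sphere (0 : E) 1 ∩ ball u ε ⊆ connectedComponentIn (sphere (0 : E) 1 \ Λ) u := by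
  obtain ⟨ε₀, hε₀, hball⟩ := Metric.isOpen_iff.1 hΛ.isOpen_compl u hu.2
  filter_upwards [Ioo_mem_nhdsGT (show (0 : ℝ) < min (ε₀ / 2) 1 by positivity)]
    with ε ⟨hε, hεlt⟩
  have hdisj : Disjoint (ball u (2 * ε)) Λ := subset_compl_iff_disjoint_right.1
    ((ball_subset_ball (by linarith [min_le_left (ε₀ / 2) 1])).trans hball)
  refine ⟨hdisj, (isPreconnected_sphere_inter_ball (mem_sphere_zero_iff_norm.1 hu.1)
    (by nlinarith [min_le_right (ε₀ / 2) 1])).subset_connectedComponentIn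
    ⟨hu.1, mem_ball_self hε⟩ fun y ⟨hy1, hy2⟩ => ⟨hy1, fun hyΛ => ?_⟩⟩
  exact disjoint_left.1 hdisj (ball_subset_ball (by linarith) hy2) hyΛ

theorem norm_midpoint_sq_of_norm_eq_one {p q : E} (hp : ‖p‖ = 1) (hq : ‖q‖ = 1) :
    ‖midpoint ℝ p q‖ ^ 2 = 1 - dist p q ^ 2 / 4 := by
  rw [midpoint_eq_smul_add, norm_smul, mul_pow, dist_eq_norm]
  have h := norm_add_sq_real p q
  have h' := norm_sub_sq_real p q
  simp only [invOf_eq_inv, norm_inv, Real.norm_ofNat] at *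
  rw [hp, hq] at h h'
  nlinarith

theorem mem_mk'_orthogonal_span_iff_of_norm_eq_one {c y : E} (hy : ‖y‖ = 1) :
    y ∈ AffineSubspace.mk' c (ℝ ∙ c)ᗮ ↔ dist y c ^ 2 = 1 - ‖c‖ ^ 2 := by
  rw [AffineSubspace.mem_mk', vsub_eq_sub, Submodule.mem_orthogonal_singleton_iff_inner_right,
    inner_sub_right, real_inner_self_eq_norm_sq, dist_eq_norm, norm_sub_sq_real, hy,
    real_inner_comm]
  constructor <;> intro h <;> linarith

variable [FiniteDimensional ℝ E]

theorem infinite_sphere_inter_of_dist_lt {P : AffineSubspace ℝ E}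
    (hP : 2 ≤ Module.finrank ℝ P.direction) {x y : E} {r : ℝ} (hy : y ∈ P) (hyx : dist y x < r) :
    (sphere x r ∩ P).Infinite := by
  have : Nonempty P := ⟨⟨y, hy⟩⟩
  have : Nontrivial P.direction :=
    Module.nontrivial_of_finrank_pos (by omega : 0 < Module.finrank ℝ P.direction)
  set c : E := (EuclideanGeometry.orthogonalProjection P x : E) with hc_def
  have hc : c ∈ P := EuclideanGeometry.orthogonalProjection_mem x
  have hpy :=
    EuclideanGeometry.dist_sq_eq_dist_orthogonalProjection_sq_add_dist_orthogonalProjection_sq x hy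
  rw [← hc_def] at hpy
  have hρ2 : 0 < r ^ 2 - dist x c ^ 2 := by
    nlinarith [dist_nonneg (x := y) (y := x), dist_nonneg (x := y) (y := c)]
  set ρ := √(r ^ 2 - dist x c ^ 2)
  have hρ : 0 < ρ := Real.sqrt_pos.2 hρ2
  obtain ⟨v, hv⟩ := (NormedSpace.sphere_nonempty (x := (0 : P.direction))).2 hρ.le
  have hv_ne : v ≠ -v := fun h => by
    rw [eq_neg_iff_add_eq_zero, ← two_smul ℝ, smul_eq_zero, or_iff_right two_ne_zero] at h
    simp [h, hρ.ne] at hv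
  have hsphere : (sphere (0 : P.direction) ρ).Infinite :=
    (isPreconnected_sphere (Module.one_lt_rank_of_one_lt_finrank (by omega)) 0 ρ
      ).infinite_of_nontrivial ⟨v, hv, -v, by simpa using hv, hv_ne⟩
  have hinj : Function.Injective fun v : P.direction => (v : E) + c := fun _ _ h =>
    Subtype.ext (add_right_cancel h)
  refine (hsphere.image hinj.injOn).mono ?_
  rintro _ ⟨v, hv, rfl⟩
  have hvP : (v : E) + c ∈ P := AffineSubspace.vadd_mem_of_mem_direction v.2 hc
  refine ⟨?_, hvP⟩
  have hpv :=
    EuclideanGeometry.dist_sq_eq_dist_orthogonalProjection_sq_add_dist_orthogonalProjection_sq x hvP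
  rw [← hc_def, dist_eq_norm _ c, add_sub_cancel_right, Submodule.norm_coe,
    mem_sphere_zero_iff_norm.1 hv] at hpv
  rw [mem_sphere, ← sq_eq_sq₀ dist_nonneg (dist_nonneg.trans hyx.le)]
  nlinarith [Real.sq_sqrt hρ2.le]

/-- Via an isometry `ℂ ≃ P.direction`, the slice is an arc of a circle in `ℂ`. -/
theorem isPreconnected_sphere_inter_inter_halfSpace {P : AffineSubspace ℝ E}
    (hP : Module.finrank ℝ P.direction = 2) (x : E) (r : ℝ) (v : E) (s : ℝ) :
    IsPreconnected (sphere x r ∩ P ∩ {y | s ≤ inner ℝ v y}) := by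
  rcases (sphere x r ∩ (P : Set E)).eq_empty_or_nonempty with h | ⟨y₀, hy₀⟩
  · simp [h, isPreconnected_empty]
  have : Nonempty P := ⟨⟨y₀, hy₀.2⟩⟩
  set c : E := (EuclideanGeometry.orthogonalProjection P x : E)
  set ι := Complex.isometryOfOrthonormal
    ((stdOrthonormalBasis ℝ P.direction).reindex (finCongr hP))
  set A : ℂ →L[ℝ] E := P.direction.subtypeL.comp ι.toContinuousLinearEquiv.toContinuousLinearMap
  have hA : ∀ z, A z = ι z := fun z => rfl
  have hAinner : ∀ z, inner ℝ v (A z + c) = inner ℝ (A.adjoint v) z + inner ℝ v c := fun z => by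
    rw [inner_add_right, ContinuousLinearMap.adjoint_inner_left]
  have heq : sphere x r ∩ P ∩ {y | s ≤ inner ℝ v y} = (fun z => A z + c) ''
      (sphere 0 (dist y₀ c) ∩ {z | s - inner ℝ v c ≤ inner ℝ (A.adjoint v) z}) := by
    ext y
    constructor
    · rintro ⟨⟨hyS, hyP⟩, hys⟩
      set z := ι.symm ⟨y -ᵥ c,
        AffineSubspace.vsub_mem_direction hyP (EuclideanGeometry.orthogonalProjection_mem x)⟩
      have hAz : A z + c = y := by simp [hA, z]
      refine ⟨z, ⟨?_, ?_⟩, hAz⟩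
      · rw [mem_sphere_zero_iff_norm,
          ← (mem_sphere_iff_dist_orthogonalProjection_eq hy₀ hyP).1 hyS,
          LinearIsometryEquiv.norm_map, dist_eq_norm]
        rfl
      · have := hAinner z
        rw [hAz] at this
        simp only [mem_ofPred_eq] at hys ⊢
        linarith
    · rintro ⟨z, ⟨hz, hzs⟩, rfl⟩
      have hyP : A z + c ∈ P :=
        AffineSubspace.vadd_mem_of_mem_direction (ι z).2
          (EuclideanGeometry.orthogonalProjection_mem x)
      refine ⟨⟨(mem_sphere_iff_dist_orthogonalProjection_eq hy₀ hyP).2 ?_, hyP⟩, ?_⟩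
      · rw [dist_eq_norm, add_sub_cancel_right, hA, Submodule.norm_coe,
          LinearIsometryEquiv.norm_map, ← mem_sphere_zero_iff_norm.1 hz]
      · simp only [mem_ofPred_eq] at hzs ⊢
        linarith [hAinner z]
  rw [heq]
  exact (Complex.isPreconnected_sphere_inter_halfSpace _ _ _).image _ (by fun_prop)

/-- On the unit sphere, `δ ≤ ‖y - w‖` is the half-space condition
`⟪w, y⟫ ≤ (1 + ‖w‖² - δ²) / 2`. -/
theorem isPreconnected_sphere_inter_diff_ball {P : AffineSubspace ℝ E}
    (hP : Module.finrank ℝ P.direction = 2) (w : E) {δ : ℝ} (hδ : 0 ≤ δ) :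
    IsPreconnected ((sphere (0 : E) 1 ∩ P) \ ball w δ) := by
  convert isPreconnected_sphere_inter_inter_halfSpace hP 0 1 (-w) ((δ ^ 2 - 1 - ‖w‖ ^ 2) / 2)
    using 1
  ext y
  simp only [Set.mem_sdiff, mem_inter_iff, mem_ball, not_lt, mem_ofPred_eq, and_congr_right_iff]
  rintro ⟨hy, -⟩
  rw [mem_sphere_zero_iff_norm] at hy
  rw [inner_neg_left, dist_eq_norm, ← sq_le_sq₀ hδ (norm_nonneg _), norm_sub_sq_real, hy,
    real_inner_comm]
  constructor <;> intro h <;> linarith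

end InnerProductSpace

theorem exists_isCircle_mem {n : ℕ} {ξ u v : Euc n} (hξ : ξ ∈ unitSphere n)
    (hu : u ∈ unitSphere n) (hv : v ∈ unitSphere n) (hξu : ξ ≠ u) (hξv : ξ ≠ v) (huv : u ≠ v) :
    ∃ C, IsCircle n C ∧ ξ ∈ C ∧ u ∈ C ∧ v ∈ C := by
  set P := affineSpan ℝ (range ![ξ, u, v])
  have hind : AffineIndependent ℝ ![ξ, u, v] :=
    EuclideanGeometry.Cospherical.affineIndependent_of_ne
      ⟨0, 1, by rintro _ (rfl | rfl | rfl) <;> [exact hξ; exact hu; exact hv]⟩ hξu hξv huv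
  have hP : Module.finrank ℝ P.direction = 2 := by
    rw [direction_affineSpan]
    exact hind.finrank_vectorSpan (by simp)
  have hP_mem : ∀ i, ![ξ, u, v] i ∈ P := fun i => mem_affineSpan ℝ (mem_range_self i)
  have hpre : IsPreconnected (unitSphere n ∩ P) := by
    have h := isPreconnected_sphere_inter_diff_ball hP (0 : Euc n) le_rfl
    rwa [ball_zero, sdiff_empty] at h
  exact ⟨_, ⟨P, hP, rfl, hpre.infinite_of_nontrivial ⟨ξ, ⟨hξ, hP_mem 0⟩, u, ⟨hu, hP_mem 1⟩, hξu⟩⟩,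
    ⟨hξ, hP_mem 0⟩, ⟨hu, hP_mem 1⟩, ⟨hv, hP_mem 2⟩⟩

theorem IsCircle.isPreconnected_diff_ball {n : ℕ} {C : Set (Euc n)} (hC : IsCircle n C)
    (w : Euc n) {δ : ℝ} (hδ : 0 ≤ δ) : IsPreconnected (C \ ball w δ) := by
  obtain ⟨P, hP, rfl, -⟩ := hC
  exact isPreconnected_sphere_inter_diff_ball hP w hδ

theorem IsCircle.hausdorffEDist_ne_top {n : ℕ} {C D : Set (Euc n)} (hC : IsCircle n C)
    (hD : IsCircle n D) : Metric.hausdorffEDist C D ≠ ⊤ := by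
  obtain ⟨P, -, rfl, hCi⟩ := hC
  obtain ⟨Q, -, rfl, hDi⟩ := hD
  exact hausdorffEDist_ne_top_of_nonempty_of_bounded hCi.nonempty hDi.nonempty
    (isBounded_sphere.subset inter_subset_left) (isBounded_sphere.subset inter_subset_left)

theorem IsCodimOneSphere.hausdorffEDist_ne_top {m : ℕ} {S T : Set (Euc m)}
    (hS : IsCodimOneSphere m S) (hT : IsCodimOneSphere m T) : Metric.hausdorffEDist S T ≠ ⊤ := by
  obtain ⟨H, -, rfl, hSi⟩ := hS
  obtain ⟨K, -, rfl, hTi⟩ := hT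
  exact hausdorffEDist_ne_top_of_nonempty_of_bounded hSi.nonempty hTi.nonempty
    (isBounded_sphere.subset inter_subset_left) (isBounded_sphere.subset inter_subset_left)

theorem IsCodimOneSphere.isClosed {m : ℕ} {S : Set (Euc m)} (hS : IsCodimOneSphere m S) :
    IsClosed S := by
  obtain ⟨H, -, rfl, -⟩ := hS
  exact isClosed_sphere.inter H.closed_of_finiteDimensional

theorem connectedComponentIn_eq_of_isCircle_near {n : ℕ} {Λ C D : Set (Euc n)}
    {u v w : Euc n} {ε : ℝ} (hε : 0 < ε) (hC : IsCircle n C) (hD : IsCircle n D)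
    (huC : u ∈ C) (hvC : v ∈ C) (hDC : hausdorffDist D C < ε) (hwΛ : w ∈ Λ)
    (hDΛ : D ∩ Λ ⊆ ball w ε)
    (hu : Disjoint (ball u (2 * ε)) Λ ∧
      sphere 0 1 ∩ ball u ε ⊆ connectedComponentIn (sphere 0 1 \ Λ) u)
    (hv : Disjoint (ball v (2 * ε)) Λ ∧
      sphere 0 1 ∩ ball v ε ⊆ connectedComponentIn (sphere 0 1 \ Λ) v) :
    connectedComponentIn (sphere 0 1 \ Λ) u = connectedComponentIn (sphere 0 1 \ Λ) v := by
  have hTΩ : D \ ball w ε ⊆ sphere 0 1 \ Λ := fun y ⟨hyD, hyw⟩ => by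
    obtain ⟨P, -, hDP, -⟩ := hD
    exact ⟨(hDP ▸ hyD).1, fun hyΛ => hyw (hDΛ ⟨hyD, hyΛ⟩)⟩
  have hnear : ∀ a ∈ C, Disjoint (ball a (2 * ε)) Λ → ∃ z ∈ D \ ball w ε, z ∈ ball a ε := by
    intro a haC ha
    obtain ⟨z, hzD, hza⟩ :=
      exists_dist_lt_of_hausdorffDist_lt' haC hDC (hD.hausdorffEDist_ne_top hC)
    refine ⟨z, ⟨hzD, fun hzw => disjoint_left.1 ha ?_ hwΛ⟩, hza⟩
    rw [mem_ball] at hzw ⊢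
    linarith [dist_triangle_left w a z]
  obtain ⟨zu, hzuT, hzu⟩ := hnear u huC hu.1
  obtain ⟨zv, hzvT, hzv⟩ := hnear v hvC hv.1
  rw [connectedComponentIn_eq (hu.2 ⟨(hTΩ hzuT).1, hzu⟩),
    connectedComponentIn_eq ((hD.isPreconnected_diff_ball w hε.le).subset_connectedComponentIn
      hzuT hTΩ hzvT),
    connectedComponentIn_eq (hv.2 ⟨(hTΩ hzvT).1, hzv⟩)]

/-- Lemma 4.6 of the paper. -/
theorem doublyStable_of_connectedComponentIn_ne {n : ℕ} {Λ : Set (Euc n)}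
    (hΛsub : Λ ⊆ unitSphere n) (hΛcl : IsClosed Λ) {u v : Euc n}
    (hu : u ∈ unitSphere n \ Λ) (hv : v ∈ unitSphere n \ Λ)
    (huv : connectedComponentIn (unitSphere n \ Λ) u ≠ connectedComponentIn (unitSphere n \ Λ) v) :
    DoublyStable n Λ := by
  rw [unitSphere] at hΛsub hu hv huv
  intro ξ hξ
  obtain ⟨ε, hu_cap, hv_cap, hε⟩ :=
    ((eventually_sphere_inter_ball_subset_connectedComponentIn hΛcl hu).and
      ((eventually_sphere_inter_ball_subset_connectedComponentIn hΛcl hv).and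
        self_mem_nhdsWithin)).exists
  obtain ⟨C, hC, hξC, huC, hvC⟩ := exists_isCircle_mem (hΛsub hξ) hu.1 hv.1
    (ne_of_mem_of_not_mem hξ hu.2) (ne_of_mem_of_not_mem hξ hv.2) fun h => huv (h ▸ rfl)
  refine ⟨C, hC, hξC, fun Ck hCk hconv => ?_⟩
  by_contra hL
  obtain ⟨w, hwΛ, hLw⟩ : ∃ w ∈ Λ, setLimsup (fun k => Ck k ∩ Λ) ⊆ {w} := by
    rcases (not_nontrivial_iff.1 hL).eq_empty_or_singleton with h | ⟨w, h⟩
    · exact ⟨ξ, hξ, h ▸ empty_subset _⟩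
    · exact ⟨w, setLimsup_subset_of_isClosed hΛcl (fun _ => inter_subset_right)
        (h.ge (mem_singleton w)), h.le⟩
  have hΛcpt : IsCompact Λ := isCompact_of_isClosed_isBounded hΛcl (isBounded_sphere.subset hΛsub)
  obtain ⟨k, hkΛ, hkC⟩ := ((eventually_subset_of_setLimsup_subset hΛcpt
    (fun _ => inter_subset_right) isOpen_ball
    (hLw.trans (singleton_subset_iff.2 (mem_ball_self hε)))).and
    (hconv.eventually (gt_mem_nhds hε))).exists
  exact huv (connectedComponentIn_eq_of_isCircle_near hε hC (hCk k) huC hvC hkC hwΛ hkΛ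
    hu_cap hv_cap)

theorem DoublyStable.nontrivial {n : ℕ} {Λ : Set (Euc n)} (h : DoublyStable n Λ)
    (hΛ : IsClosed Λ) (hne : Λ.Nonempty) : Λ.Nontrivial := by
  obtain ⟨ξ, hξ⟩ := hne
  obtain ⟨C, hC, -, hCst⟩ := h ξ hξ
  exact (hCst (fun _ => C) (fun _ => hC) (by simp [SetsConvergeTo])).mono
    (setLimsup_subset_of_isClosed hΛ fun _ => inter_subset_right)

theorem isCodimOneSphere_unitSphere_inter_mk' {m : ℕ} (hm : 2 ≤ m) {c : Euc m} (hc0 : c ≠ 0)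
    (hc1 : ‖c‖ < 1) : IsCodimOneSphere m (unitSphere m ∩ AffineSubspace.mk' c (ℝ ∙ c)ᗮ) := by
  have hdir : Module.finrank ℝ (AffineSubspace.mk' c (ℝ ∙ c)ᗮ).direction = m := by
    have h := Submodule.finrank_add_finrank_orthogonal (ℝ ∙ c)
    rw [finrank_span_singleton hc0, finrank_euclideanSpace_fin] at h
    rw [AffineSubspace.direction_mk']
    omega
  exact ⟨_, hdir, rfl, infinite_sphere_inter_of_dist_lt (hdir.symm ▸ hm)
    (AffineSubspace.self_mem_mk' c _) (by rwa [dist_zero_right])⟩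

theorem exists_isCodimOneSphere_inter_eq_singleton {m : ℕ} (hm : 2 ≤ m) {K : Set (Euc m)}
    (hK : IsCompact K) (hKsub : K ⊆ unitSphere m) (hKnt : K.Nontrivial)
    (hKne : K ≠ unitSphere m) : ∃ p ∈ K, ∃ S, IsCodimOneSphere m S ∧ K ∩ S = {p} := by
  obtain ⟨q, hqS, hqK⟩ := not_subset.1 fun h => hKne (hKsub.antisymm h)
  obtain ⟨p, hpK, hp⟩ := hK.exists_infDist_eq_dist hKnt.nonempty q
  have hnear : ∀ z ∈ K, dist p q ≤ dist z q := fun z hz => by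
    rw [dist_comm p, dist_comm z, ← hp]
    exact infDist_le_dist_of_mem hz
  have hnorm : ∀ z ∈ K, ‖z‖ = 1 := fun z hz => mem_sphere_zero_iff_norm.1 (hKsub hz)
  have hq : ‖q‖ = 1 := mem_sphere_zero_iff_norm.1 hqS
  have hr0 : 0 < dist p q := dist_pos.2 (ne_of_mem_of_not_mem hpK hqK)
  have hr2 : dist p q < 2 := by
    obtain ⟨z, hzK, hz⟩ := hKnt.exists_ne (-q)
    have hmid : midpoint ℝ z q ≠ 0 := fun h => hz (by
      rw [midpoint_eq_smul_add, smul_eq_zero, add_eq_zero_iff_eq_neg] at h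
      exact h.resolve_left (by norm_num))
    have := norm_midpoint_sq_of_norm_eq_one (hnorm z hzK) hq
    have := norm_pos_iff.2 hmid
    nlinarith [hnear z hzK, dist_nonneg (x := z) (y := q)]
  set c := midpoint ℝ p q
  have hc : ‖c‖ ^ 2 = 1 - dist p q ^ 2 / 4 := norm_midpoint_sq_of_norm_eq_one (hnorm p hpK) hq
  have hc0 : c ≠ 0 := fun h => by rw [h, norm_zero] at hc; nlinarith
  have hc1 : ‖c‖ < 1 := by nlinarith [norm_nonneg c]
  have hpc : dist p c = dist p q / 2 := by simp [c, dist_left_midpoint]; ring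
  refine ⟨p, hpK, _, isCodimOneSphere_unitSphere_inter_mk' hm hc0 hc1, ?_⟩
  ext z
  constructor
  · rintro ⟨hzK, -, hzH⟩
    have hzc := (mem_mk'_orthogonal_span_iff_of_norm_eq_one (hnorm z hzK)).1 hzH
    rw [hc] at hzc
    exact eq_of_dist_midpoint_le_of_le_dist (by nlinarith [dist_nonneg (x := z) (y := c)])
      (hnear z hzK)
  · intro hz
    rw [mem_singleton_iff.1 hz]
    refine ⟨hpK, hKsub hpK, (mem_mk'_orthogonal_span_iff_of_norm_eq_one (hnorm p hpK)).2 ?_⟩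
    rw [hpc, hc]
    ring

theorem no_dense_orbit_of_WKM_general
    (n m : ℕ) (hm : 2 ≤ m)
    (Λ : Set (Euc n)) (hne : Λ.Nonempty) (hΛsub : Λ ⊆ unitSphere n)
    (hΛcl : IsClosed Λ)
    (htwo : ∃ x ∈ unitSphere n \ Λ, ∃ y ∈ unitSphere n \ Λ,
      connectedComponentIn (unitSphere n \ Λ) x ≠
        connectedComponentIn (unitSphere n \ Λ) y)
    (f : Euc n → Euc m) (hfc : ContinuousOn f Λ) (hfi : Set.InjOn f Λ)
    (hfm : Set.MapsTo f Λ (unitSphere m)) (hfne : f '' Λ ≠ unitSphere m) :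
    ∃ (C : Set (Euc n)) (S : Set (Euc m)) (ξ : Euc n),
      IsCircle n C ∧ IsCodimOneSphere m S ∧ ξ ∈ Λ ∧ ξ ∈ C ∧ f ξ ∈ S ∧
      ¬ ∃ (Ck : ℕ → Set (Euc n)) (Sk : ℕ → Set (Euc m)),
          (∀ k, IsCircle n (Ck k)) ∧ (∀ k, (Ck k ∩ Λ).Nonempty) ∧
          (∀ k, IsCodimOneSphere m (Sk k)) ∧ (∀ k, f '' (Ck k ∩ Λ) ⊆ Sk k) ∧
          SetsConvergeTo Ck C ∧ SetsConvergeTo Sk S := by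
  obtain ⟨u, hu, v, hv, huv⟩ := htwo
  have hds := doublyStable_of_connectedComponentIn_ne hΛsub hΛcl hu hv huv
  have hΛcpt : IsCompact Λ := isCompact_of_isClosed_isBounded hΛcl (isBounded_sphere.subset hΛsub)
  obtain ⟨_, ⟨ξ, hξ, rfl⟩, S, hS, hΛS⟩ := exists_isCodimOneSphere_inter_eq_singleton hm
    (hΛcpt.image_of_continuousOn hfc) hfm.image_subset
    ((hds.nontrivial hΛcl hne).image_of_injOn hfi) hfne
  obtain ⟨C, hC, hξC, hCst⟩ := hds ξ hξ
  refine ⟨C, S, ξ, hC, hS, hξ, hξC, (hΛS.ge rfl).2, ?_⟩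
  rintro ⟨Ck, Sk, hCk, -, hSk, hfCk, hCconv, hSconv⟩
  have hslice : ∀ k, Ck k ∩ Λ ⊆ Λ := fun _ => inter_subset_right
  have hlim : ∀ x ∈ setLimsup (fun k => Ck k ∩ Λ), x ∈ Λ ∧ f x = f ξ := fun x hx => by
    have hxΛ := setLimsup_subset_of_isClosed hΛcl hslice hx
    have hxS : f x ∈ S := setLimsup_subset_of_setsConvergeTo hS.isClosed hfCk
      (fun k => (hSk k).hausdorffEDist_ne_top hS) hSconv
      (image_setLimsup_subset hΛcl hslice hfc ⟨x, hx, rfl⟩)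
    exact ⟨hxΛ, hΛS.subset ⟨mem_image_of_mem f hxΛ, hxS⟩⟩
  obtain ⟨a, ha, b, hb, hab⟩ := hCst Ck hCk hCconv
  exact hab (hfi (hlim a ha).1 (hlim b hb).1 ((hlim a ha).2.trans (hlim b hb).2.symm))

/-- Combination of Lemma 4.6 and Theorem 4.1: if `Ω = S^n \ Λ` satisfies WKM and has
at least two components and `f : Λ → S^m` is continuous injective with `f(Λ) ≠ S^m`,
then there are a circle `C`, a codimension-one sphere `S` and `ξ ∈ Λ ∩ C` with
`f ξ ∈ S` such that no sequence of pairs `(C_k, S_k)` with `C_k ∩ Λ ≠ ∅` and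
`f(C_k ∩ Λ) ⊆ S_k` converges to `(C, S)`. -/
theorem no_dense_orbit_of_WKM
    (n m : ℕ) (hn : 2 ≤ n) (hm : 2 ≤ m)
    (Λ : Set (Euc n)) (hne : Λ.Nonempty) (hΛsub : Λ ⊆ unitSphere n)
    (hΛcl : IsClosed Λ) (hWKM : WKM (unitSphere n \ Λ))
    (htwo : ∃ x ∈ unitSphere n \ Λ, ∃ y ∈ unitSphere n \ Λ,
      connectedComponentIn (unitSphere n \ Λ) x ≠
        connectedComponentIn (unitSphere n \ Λ) y)
    (f : Euc n → Euc m) (hfc : ContinuousOn f Λ) (hfi : Set.InjOn f Λ)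
    (hfm : Set.MapsTo f Λ (unitSphere m)) (hfne : f '' Λ ≠ unitSphere m) :
    ∃ (C : Set (Euc n)) (S : Set (Euc m)) (ξ : Euc n),
      IsCircle n C ∧ IsCodimOneSphere m S ∧ ξ ∈ Λ ∧ ξ ∈ C ∧ f ξ ∈ S ∧
      ¬ ∃ (Ck : ℕ → Set (Euc n)) (Sk : ℕ → Set (Euc m)),
          (∀ k, IsCircle n (Ck k)) ∧ (∀ k, (Ck k ∩ Λ).Nonempty) ∧
          (∀ k, IsCodimOneSphere m (Sk k)) ∧ (∀ k, f '' (Ck k ∩ Λ) ⊆ Sk k) ∧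
          SetsConvergeTo Ck C ∧ SetsConvergeTo Sk S :=
  no_dense_orbit_of_WKM_general n m hm Λ hne hΛsub hΛcl htwo f hfc hfi hfm hfne
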